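/- Let S = {0,1}^{p+1} with p ≥ 1, let p(·) be a probability mass function on S with p(w) > 0 for all w, and Y : S → ℝ. Then the randomization variance of the uniform-weight p-lag estimator, which equals Σ_{w∈{0,1}^p}(Y(1,w)²/p(1,w) + Y(0,w)²/p(0,w)) − Σ_{w,w'∈{0,1}^p}(Y(1,w') − Y(0,w'))(Y(1,w) − Y(0,w)) (up to the factor 1/2^{2p}), is bounded above by Σ_{w∈S} Y(w)²(1 + 2 p(w)(2^{p−1} − 1))/p(w). -/
import Mathlib


/-- Upper bound on the randomization variance of the uniform-weight p-lag
estimator: the variance expression is bounded by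
∑_{w∈S} Y(w)² (1 + 2 p(w)(2^{p−1} − 1)) / p(w). -/
theorem stmt_18 (p : ℕ) (hp : 1 ≤ p)
    (pm : Bool × (Fin p → Bool) → ℝ) (hpm : ∀ s, 0 < pm s)
    (hsum : ∑ s : Bool × (Fin p → Bool), pm s = 1)
    (Y : Bool × (Fin p → Bool) → ℝ) :
    (∑ w : Fin p → Bool,
        (Y (true, w) ^ 2 / pm (true, w) + Y (false, w) ^ 2 / pm (false, w))) -
      (∑ w : Fin p → Bool, ∑ w' : Fin p → Bool,
        (Y (true, w') - Y (false, w')) * (Y (true, w) - Y (false, w))) ≤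
    ∑ s : Bool × (Fin p → Bool),
      Y s ^ 2 * (1 + 2 * pm s * ((2 : ℝ) ^ (p - 1) - 1)) / pm s := by
  set c : ℝ := (2 : ℝ) ^ (p - 1) - 1 with hcdef
  have hc : (0 : ℝ) ≤ c := by
    have : (1 : ℝ) ≤ (2 : ℝ) ^ (p - 1) := one_le_pow₀ one_le_two
    simp [hcdef]; linarith
  have hdouble :
      (∑ w : Fin p → Bool, ∑ w' : Fin p → Bool,
        (Y (true, w') - Y (false, w')) * (Y (true, w) - Y (false, w))) =
      (∑ w : Fin p → Bool, (Y (true, w) - Y (false, w))) ^ 2 := by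
    rw [sq, Finset.sum_mul_sum]
    exact Finset.sum_comm
  have hR :
      (∑ s : Bool × (Fin p → Bool), Y s ^ 2 * (1 + 2 * pm s * c) / pm s) =
      (∑ s : Bool × (Fin p → Bool), Y s ^ 2 / pm s) +
      (∑ s : Bool × (Fin p → Bool), 2 * c * Y s ^ 2) := by
    rw [← Finset.sum_add_distrib]
    refine Finset.sum_congr rfl fun s _ => ?_
    have := (hpm s).ne'
    field_simp
  have hA :
      (∑ s : Bool × (Fin p → Bool), Y s ^ 2 / pm s) =
      ∑ w : Fin p → Bool,
        (Y (true, w) ^ 2 / pm (true, w) + Y (false, w) ^ 2 / pm (false, w)) := by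
    rw [Fintype.sum_prod_type, Fintype.sum_bool, ← Finset.sum_add_distrib]
  have hsq : 0 ≤ (∑ w : Fin p → Bool, (Y (true, w) - Y (false, w))) ^ 2 :=
    sq_nonneg _
  have hY : 0 ≤ ∑ s : Bool × (Fin p → Bool), 2 * c * Y s ^ 2 :=
    Finset.sum_nonneg fun s _ => by positivity
  rw [hdouble, hR, hA]
  linarith
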